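/- The GOSPAL mechanism is strategy-proof: for every user i, every true valuation r_i > 0, and every bid vector q (with q_j > 0 for all j), the utility of user i when bidding r_i is at least its utility when bidding q_i, holding other bids fixed. That is, U_i(r_i, q_{-i}) ≥ U_i(q_i, q_{-i}). -/

import Mathlib

/-! This is the Clarke pivot argument of VCG mechanisms. When user `i` is allocated under
bids `q`, the price makes its utility equal to the perceived social utility of the selected
ordering, evaluated with `i`'s bid replaced by its true valuation `r`, minus the optimum `Ũ*`
with `i`'s bid set to `0`. Hence no bid earns more than the marginal contribution
`Ũ*(r, q_{-i}) - Ũ*(0, q_{-i})`, and the truthful bid earns exactly that. -/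

open Finset

/-- Perceived social utility of the (bid-independent) allocation `A ω` under bids `q`. -/
def Ut {V Ω : Type*} (A : Ω → Finset V) (q : V → ℝ) (ω : Ω) : ℝ := ∑ j ∈ A ω, q j

/-- Maximum perceived social utility over all group orderings. -/
noncomputable def Ustar {V Ω : Type*} [Fintype Ω] [Nonempty Ω]
    (A : Ω → Finset V) (q : V → ℝ) : ℝ :=
  Finset.univ.sup' Finset.univ_nonempty (fun ω => Ut A q ω)

/-- GOSPAL price for user `i` under bids `q`, when the ordering `ω` is selected:
`p_i(q) = (lim_{ε→0⁺} Ũ*(q_{-i}(ε)) − (Ũ*(q) − q_i)) · x_i(ω)`; the limit term equals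
`Ũ*` evaluated with user `i`'s bid set to `0` (by continuity of `Ũ*`). -/
noncomputable def price {V Ω : Type*} [Fintype Ω] [Nonempty Ω] [DecidableEq V]
    (A : Ω → Finset V) (q : V → ℝ) (i : V) (ω : Ω) : ℝ :=
  (Ustar A (Function.update q i 0) - (Ustar A q - q i)) * (if i ∈ A ω then 1 else 0)

open Function

section Mechanism

variable {V Ω : Type*}

lemma Ut_update_of_mem [DecidableEq V] (A : Ω → Finset V) (q : V → ℝ) (i : V) (b : ℝ)
    {ω : Ω} (h : i ∈ A ω) :
    Ut A (update q i b) ω = Ut A (update q i 0) ω + b := by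
  unfold Ut
  rw [sum_update_of_mem h, sum_update_of_mem h]
  ring

lemma Ut_update_of_notMem [DecidableEq V] (A : Ω → Finset V) (q : V → ℝ) (i : V) (b : ℝ)
    {ω : Ω} (h : i ∉ A ω) :
    Ut A (update q i b) ω = Ut A q ω :=
  sum_congr rfl fun _ hj => update_of_ne (ne_of_mem_of_not_mem hj h) _ _

variable [Fintype Ω] [Nonempty Ω] (A : Ω → Finset V)

lemma Ut_le_Ustar (q : V → ℝ) (ω : Ω) : Ut A q ω ≤ Ustar A q :=
  le_sup' _ (mem_univ ω)

lemma Ustar_eq_of_forall_le {q : V → ℝ} {ω₀ : Ω} (h : ∀ ω, Ut A q ω ≤ Ut A q ω₀) :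
    Ustar A q = Ut A q ω₀ :=
  le_antisymm (sup'_le _ _ fun ω _ => h ω) (Ut_le_Ustar A q ω₀)

lemma Ustar_mono {q q' : V → ℝ} (h : q ≤ q') : Ustar A q ≤ Ustar A q' :=
  sup'_mono_fun fun _ _ => sum_le_sum fun j _ => h j

variable [DecidableEq V]

noncomputable def utility (σ : (V → ℝ) → Ω) (r : ℝ) (q : V → ℝ) (i : V) : ℝ :=
  (r - price A q i (σ q)) * (if i ∈ A (σ q) then 1 else 0)

variable {A} {σ : (V → ℝ) → Ω} {q : V → ℝ} {i : V} {r : ℝ}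

lemma utility_of_mem (hσ : ∀ ω, Ut A q ω ≤ Ut A q (σ q)) (h : i ∈ A (σ q)) :
    utility A σ r q i = Ut A (update q i r) (σ q) - Ustar A (update q i 0) := by
  have hq : Ut A q (σ q) = Ut A (update q i 0) (σ q) + q i := by
    simpa only [update_eq_self] using Ut_update_of_mem A q i (q i) h
  simp only [utility, price, h, if_true, mul_one, Ustar_eq_of_forall_le A hσ, hq,
    Ut_update_of_mem A q i r h]
  ring

lemma Ustar_update_zero_le (hr : 0 ≤ r) :
    Ustar A (update q i 0) ≤ Ustar A (update q i r) :=
  Ustar_mono A (update_le_update_iff'.2 hr)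

lemma utility_le_marginal (hσ : ∀ ω, Ut A q ω ≤ Ut A q (σ q)) (hr : 0 ≤ r) :
    utility A σ r q i ≤ Ustar A (update q i r) - Ustar A (update q i 0) := by
  by_cases h : i ∈ A (σ q)
  · rw [utility_of_mem hσ h]
    exact sub_le_sub_right (Ut_le_Ustar A _ _) _
  · simpa [utility, h] using Ustar_update_zero_le hr

lemma utility_update_self
    (hσ : ∀ ω, Ut A (update q i r) ω ≤ Ut A (update q i r) (σ (update q i r)))
    (hr : 0 ≤ r) :
    utility A σ r (update q i r) i = Ustar A (update q i r) - Ustar A (update q i 0) := by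
  by_cases h : i ∈ A (σ (update q i r))
  · rw [utility_of_mem hσ h, update_idem, update_idem, Ustar_eq_of_forall_le A hσ]
  · have hle : Ustar A (update q i r) ≤ Ustar A (update q i 0) := by
      rw [Ustar_eq_of_forall_le A hσ, Ut_update_of_notMem A q i r h,
        ← Ut_update_of_notMem A q i 0 h]
      exact Ut_le_Ustar A _ _
    simp only [utility, h, if_false, mul_zero]
    exact (sub_eq_zero.2 (le_antisymm hle (Ustar_update_zero_le hr))).symm

end Mechanism

theorem gospal_strategy_proof_general {V Ω : Type*} [Fintype Ω] [Nonempty Ω]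
    [DecidableEq V]
    (A : Ω → Finset V) (σ : (V → ℝ) → Ω)
    (hσ : ∀ (q : V → ℝ) (ω : Ω), Ut A q ω ≤ Ut A q (σ q))
    (i : V) (r : ℝ) (hr : 0 < r) (q : V → ℝ) :
    (r - price A q i (σ q)) * (if i ∈ A (σ q) then 1 else 0) ≤
      (r - price A (Function.update q i r) i (σ (Function.update q i r))) *
        (if i ∈ A (σ (Function.update q i r)) then 1 else 0) :=
  calc utility A σ r q i
      ≤ Ustar A (update q i r) - Ustar A (update q i 0) := utility_le_marginal (hσ q) hr.le
    _ = utility A σ r (update q i r) i := (utility_update_self (hσ _) hr.le).symm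

/-- Strategy-proofness: for any tie-breaking selection rule `σ` that always
picks a perceived-utility-maximizing ordering, any user `i` with true valuation `r > 0`,
and any bid vector `q` with positive bids, the utility of user `i` when bidding its true
valuation `r` (other bids fixed) is at least its utility when bidding `q i`. -/
theorem gospal_strategy_proof {V Ω : Type*} [Fintype V] [Fintype Ω] [Nonempty Ω]
    [DecidableEq V]
    (A : Ω → Finset V) (σ : (V → ℝ) → Ω)
    (hσ : ∀ (q : V → ℝ) (ω : Ω), Ut A q ω ≤ Ut A q (σ q))
    (i : V) (r : ℝ) (hr : 0 < r) (q : V → ℝ) (hq : ∀ j, 0 < q j) :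
    (r - price A q i (σ q)) * (if i ∈ A (σ q) then 1 else 0) ≤
      (r - price A (Function.update q i r) i (σ (Function.update q i r))) *
        (if i ∈ A (σ (Function.update q i r)) then 1 else 0) :=
  gospal_strategy_proof_general A σ hσ i r hr q
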